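/- arXiv:2503.21559 — 9 statements merged into one kernel-verified Lean document; each statement's English description precedes it below -/
import Mathlib

section
/- Let K be a discretely valued field with normalized valuation v, valuation ring O, and residue field of cardinality 2, and suppose v(2) = e with e > 1. If x, y ∈ O satisfy v(x - y) ≥ e, then v(x^4 - y^4) ≥ 3e + 1. -/
private lemma aux_one_le (a : WithTop ℤ) (h : 0 < a) : 1 ≤ a := by
  induction a using WithTop.recTopCoe with
  | top => exact le_top
  | coe n =>
    have : (0:ℤ) < n := by exact_mod_cast h
    exact_mod_cast this

private lemma aux_add_one (n : ℤ) (a : WithTop ℤ) (h : (n:WithTop ℤ) < a) :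
    ((n+1:ℤ):WithTop ℤ) ≤ a := by
  induction a using WithTop.recTopCoe with
  | top => exact le_top
  | coe m =>
    have : n < m := by exact_mod_cast h
    exact_mod_cast this

private lemma aux_double_eq (a : WithTop ℤ) (h : a = a + a) (h' : a ≠ ⊤) : a = 0 := by
  induction a using WithTop.recTopCoe with
  | top => exact absurd rfl h'
  | coe n =>
    have : n = n + n := by exact_mod_cast h
    have : n = 0 := by omega
    simp [this]

private lemma aux_double_zero (a : WithTop ℤ) (h : a + a = 0) : a = 0 := by
  induction a using WithTop.recTopCoe with
  | top => simp at h
  | coe n =>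
    have : n + n = 0 := by exact_mod_cast h
    have : n = 0 := by omega
    simp [this]

private lemma aux_cancel (a : WithTop ℤ) (n : ℤ) (h : a + (n:WithTop ℤ) = (n:WithTop ℤ)) :
    a = 0 := by
  induction a using WithTop.recTopCoe with
  | top => simp [WithTop.top_add] at h
  | coe m =>
    have : m + n = n := by exact_mod_cast h
    have : m = 0 := by omega
    simp [this]

/-- Let `K` be a discretely valued field with normalized (surjective) valuation `v`,
residue field of cardinality 2 (every unit is congruent to 1 modulo the maximal ideal),
and `v 2 = e` with `e > 1`. If `x, y` are in the valuation ring and `v (x - y) ≥ e`,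
then `v (x^4 - y^4) ≥ 3e + 1`. -/
theorem stmt_0 {K : Type*} [Field K] (v : K → WithTop ℤ)
    (hv0 : ∀ x : K, v x = ⊤ ↔ x = 0)
    (hvmul : ∀ x y : K, v (x * y) = v x + v y)
    (hvadd : ∀ x y : K, min (v x) (v y) ≤ v (x + y))
    (hsurj : ∀ n : ℤ, ∃ x : K, v x = (n : WithTop ℤ))
    (hres : ∀ x : K, v x = 0 → 0 < v (x - 1))
    (e : ℕ) (he : 1 < e) (h2 : v 2 = ((e : ℤ) : WithTop ℤ))
    (x y : K) (hx : 0 ≤ v x) (hy : 0 ≤ v y)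
    (hxy : ((e : ℤ) : WithTop ℤ) ≤ v (x - y)) :
    ((3 * (e : ℤ) + 1 : ℤ) : WithTop ℤ) ≤ v (x ^ 4 - y ^ 4) := by
  -- v 1 = 0
  have hv1 : v 1 = 0 := by
    have h := hvmul 1 1
    rw [one_mul] at h
    refine aux_double_eq _ h ?_
    intro ht
    exact one_ne_zero ((hv0 1).mp ht)
  -- v (-z) = v z
  have hvneg : ∀ z : K, v (-z) = v z := by
    have hm1 : v (-1 : K) = 0 := by
      have h := hvmul (-1) (-1)
      rw [neg_mul_neg, one_mul, hv1] at h
      exact aux_double_zero _ h.symm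
    intro z
    rw [← neg_one_mul, hvmul, hm1, zero_add]
  have hvsub : ∀ a b : K, min (v a) (v b) ≤ v (a - b) := by
    intro a b
    have h := hvadd a (-b)
    rwa [hvneg, ← sub_eq_add_neg] at h
  have hepos : (0 : WithTop ℤ) < ((e:ℤ) : WithTop ℤ) := by
    exact_mod_cast (by omega : (0:ℤ) < (e:ℤ))
  -- factorization
  have hfac : x ^ 4 - y ^ 4 = (x - y) * ((x + y) * (x ^ 2 + y ^ 2)) := by ring
  rw [hfac, hvmul, hvmul]
  -- bound on v (x+y)
  have hv2y : ((e:ℤ):WithTop ℤ) ≤ v (2*y) := by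
    rw [hvmul, h2]
    exact le_add_of_nonneg_right hy
  have hsum : ((e:ℤ):WithTop ℤ) ≤ v (x+y) := by
    have hxe : x + y = (x - y) + 2*y := by ring
    rw [hxe]
    exact le_trans (le_min hxy hv2y) (hvadd _ _)
  have hsq0 : x^2 + y^2 = (x-y)*(x-y) + 2*(x*y) := by ring
  rcases hx.lt_or_eq with hxpos | hx0
  · -- case v x > 0
    have hypos : 0 < v y := by
      have hyd : y = x - (x - y) := by ring
      have h := hvsub x (x - y)
      rw [← hyd] at h
      exact lt_of_lt_of_le (lt_min hxpos (lt_of_lt_of_le hepos hxy)) h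
    have hx1 : 1 ≤ v x := aux_one_le _ hxpos
    have hy1 : 1 ≤ v y := aux_one_le _ hypos
    have hsq : (((e:ℤ)+1:ℤ):WithTop ℤ) ≤ v (x^2+y^2) := by
      rw [hsq0]
      refine le_trans (le_min ?_ ?_) (hvadd _ _)
      · rw [hvmul]
        have hc : (((e:ℤ)+1:ℤ):WithTop ℤ) ≤ ((e:ℤ):WithTop ℤ) + ((e:ℤ):WithTop ℤ) := by
          have : ((e:ℤ)+1:ℤ) ≤ (e:ℤ) + (e:ℤ) := by omega
          exact_mod_cast this
        exact hc.trans (add_le_add hxy hxy)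
      · rw [hvmul, hvmul, h2]
        have hc : (((e:ℤ)+1:ℤ):WithTop ℤ) ≤ ((e:ℤ):WithTop ℤ) + (1 + 1) := by
          have h11 : (1 + 1 : WithTop ℤ) = ((2:ℤ) : WithTop ℤ) := by norm_cast
          rw [h11]
          exact_mod_cast (by omega : ((e:ℤ)+1:ℤ) ≤ (e:ℤ) + 2)
        refine hc.trans (add_le_add le_rfl (add_le_add hx1 hy1))
    refine le_trans ?_ (add_le_add hxy (add_le_add hsum hsq))
    norm_cast
    omega
  · -- case v x = 0
    have hy0 : v y = 0 := by
      by_contra h'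
      have hypos : 0 < v y := lt_of_le_of_ne hy (Ne.symm h')
      have hxd : x = y + (x - y) := by ring
      have h := hvadd y (x - y)
      rw [← hxd, ← hx0] at h
      have : (0:WithTop ℤ) < min (v y) (v (x-y)) :=
        lt_min hypos (lt_of_lt_of_le hepos hxy)
      exact absurd (lt_of_lt_of_le this h) (lt_irrefl _)
    have h2y : v (2*y) = ((e:ℤ):WithTop ℤ) := by rw [hvmul, h2, hy0, add_zero]
    have hsq : ((e:ℤ):WithTop ℤ) ≤ v (x^2+y^2) := by
      rw [hsq0]
      refine le_trans (le_min ?_ ?_) (hvadd _ _)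
      · rw [hvmul]
        calc ((e:ℤ):WithTop ℤ) ≤ ((e:ℤ):WithTop ℤ) + ((e:ℤ):WithTop ℤ) :=
              le_add_of_nonneg_right hepos.le
          _ ≤ _ := add_le_add hxy hxy
      · rw [hvmul, hvmul, h2, ← hx0, hy0, add_zero, add_zero]
    rcases hxy.lt_or_eq with hlt | heq
    · -- v (x-y) ≥ e+1
      have hd1 : (((e:ℤ)+1:ℤ):WithTop ℤ) ≤ v (x - y) := aux_add_one _ _ hlt
      refine le_trans ?_ (add_le_add hd1 (add_le_add hsum hsq))
      norm_cast
      omega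
    · -- v (x-y) = e : use residue field F₂
      have h2yne : (2:K)*y ≠ 0 := by
        intro hz
        rw [hz, (hv0 0).mpr rfl] at h2y
        exact WithTop.coe_ne_top h2y.symm
      set u := (x - y) / (2*y) with hu_def
      have hu : u * (2*y) = x - y := div_mul_cancel₀ _ h2yne
      have hvu : v u = 0 := by
        have h := hvmul u (2*y)
        rw [hu, h2y, ← heq] at h
        exact aux_cancel _ _ h.symm
      have hu1 := hres u hvu
      have hd2y : (((e:ℤ)+1:ℤ):WithTop ℤ) ≤ v ((x-y) - 2*y) := by
        have hfac2 : (x - y) - 2*y = (u - 1) * (2*y) := by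
          rw [sub_mul, one_mul, hu]
        rw [hfac2, hvmul, h2y]
        have : (((e:ℤ)+1:ℤ):WithTop ℤ) = ((1:ℤ):WithTop ℤ) + ((e:ℤ):WithTop ℤ) := by
          push_cast
          rw [add_comm]
        rw [this]
        exact add_le_add (aux_one_le _ hu1) le_rfl
      have hsum2 : (((e:ℤ)+1:ℤ):WithTop ℤ) ≤ v (x + y) := by
        have hxe : x + y = ((x - y) - 2*y) + 2*(2*y) := by ring
        rw [hxe]
        refine le_trans (le_min hd2y ?_) (hvadd _ _)
        rw [hvmul, h2, h2y]
        have : ((e:ℤ)+1:ℤ) ≤ (e:ℤ) + (e:ℤ) := by omega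
        calc (((e:ℤ)+1:ℤ):WithTop ℤ) ≤ (((e:ℤ)+(e:ℤ):ℤ):WithTop ℤ) := by exact_mod_cast this
          _ = ((e:ℤ):WithTop ℤ) + ((e:ℤ):WithTop ℤ) := by push_cast; rfl
      refine le_trans ?_ (add_le_add hxy (add_le_add hsum2 hsq))
      norm_cast
      omega
end

section
/- −1 is not a sum of 14 fourth powers in ℚ₂: there do not exist x₁, …, x₁₄ ∈ ℚ₂ with x₁⁴ + ⋯ + x₁₄⁴ = −1. -/
/-!
Scale a putative solution by the least power `2 ^ n` making every coordinate a 2-adic integer: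
this gives `∑ yᵢ ^ 4 = -2 ^ (4 n)` in `ℤ₂`, with some `yᵢ` a unit when `n > 0`. Modulo 16 a fourth
power is `1` for a unit and `0` otherwise, so the number `k ≤ 14` of units among the `yᵢ` satisfies
`k ≡ -1` (if `n = 0`) or `k ≡ 0` with `k > 0` (if `n > 0`) modulo 16; both are impossible.
-/

open Finset Filter Topology

namespace Padic

variable {p : ℕ} [Fact p.Prime]

lemma exists_pow_mul_norm_le_one {ι : Type*} [Finite ι] (x : ι → ℚ_[p]) :
    ∃ n : ℕ, ∀ i, ‖(p : ℚ_[p]) ^ n * x i‖ ≤ 1 := by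
  have hp : ‖(p : ℚ_[p])‖ < 1 := by
    rw [norm_p]; exact inv_lt_one_of_one_lt₀ (mod_cast (Fact.out : p.Prime).one_lt)
  have hlim (i : ι) : Tendsto (fun n : ℕ ↦ (p : ℚ_[p]) ^ n * x i) atTop (𝓝 0) := by
    simpa using (tendsto_pow_atTop_nhds_zero_of_norm_lt_one hp).mul_const (x i)
  have hball (i : ι) : ∀ᶠ n in atTop, ‖(p : ℚ_[p]) ^ n * x i‖ ≤ 1 := by
    simpa using (hlim i).eventually (Metric.closedBall_mem_nhds 0 one_pos)
  exact (eventually_all.2 hball).exists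

lemma norm_p_mul_eq_one {z : ℚ_[p]} (hle : ‖(p : ℚ_[p]) * z‖ ≤ 1) (hlt : 1 < ‖z‖) :
    ‖(p : ℚ_[p]) * z‖ = 1 := by
  have hp : (0 : ℝ) < p := mod_cast (Fact.out : p.Prime).pos
  have hz : (p : ℝ) ≤ ‖z‖ := by
    simpa using (norm_le_pow_iff_norm_lt_pow_add_one z 0).not.1 (by simpa using hlt)
  refine le_antisymm hle ?_
  rwa [norm_mul, norm_p, ← div_eq_inv_mul, le_div_iff₀ hp, one_mul]

lemma exists_integral_rescaling {ι : Type*} [Finite ι] (x : ι → ℚ_[p]) :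
    ∃ (n : ℕ) (y : ι → ℤ_[p]), (∀ i, (y i : ℚ_[p]) = (p : ℚ_[p]) ^ n * x i) ∧
      (n = 0 ∨ ∃ i, IsUnit (y i)) := by
  classical
  have hex := exists_pow_mul_norm_le_one x
  refine ⟨Nat.find hex, fun i ↦ ⟨_, Nat.find_spec hex i⟩, fun i ↦ rfl, ?_⟩
  refine or_iff_not_imp_left.2 fun h0 ↦ ?_
  obtain ⟨n, h⟩ := Nat.exists_eq_succ_of_ne_zero h0
  obtain ⟨i, hi⟩ : ∃ i, 1 < ‖(p : ℚ_[p]) ^ n * x i‖ := by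
    simpa using Nat.find_min hex (h ▸ n.lt_succ_self)
  refine ⟨i, PadicInt.isUnit_iff.2 ?_⟩
  have hle := Nat.find_spec hex i
  show ‖(p : ℚ_[p]) ^ Nat.find hex * x i‖ = 1
  rw [h, pow_succ', mul_assoc] at hle ⊢
  exact norm_p_mul_eq_one hle hi

end Padic

namespace PadicInt

open scoped Classical in
lemma toZModPow_four_pow_four (z : ℤ_[2]) :
    toZModPow 4 (z ^ 4) = if IsUnit z then 1 else 0 := by
  have hfourth : ∀ c : ZMod (2 ^ 4), c ^ 4 = 0 ∨ c ^ 4 = 1 := by decide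
  split_ifs with hz
  · have hu : IsUnit (toZModPow 4 z ^ 4) := (hz.map _).pow 4
    rw [map_pow]
    refine (hfourth _).resolve_left fun h0 ↦ ?_
    rw [h0] at hu
    have : Fact (1 < 2 ^ 4) := ⟨by norm_num⟩
    exact not_isUnit_zero hu
  · obtain ⟨w, rfl⟩ := (norm_lt_one_iff_dvd z).1 (not_isUnit_iff.1 hz)
    have h16 : (2 : ZMod (2 ^ 4)) ^ 4 = 0 := by decide
    rw [mul_pow, map_mul, map_pow, map_natCast, Nat.cast_ofNat, h16, zero_mul]

open scoped Classical in
lemma toZModPow_sum_pow_four {ι : Type*} [Fintype ι] (y : ι → ℤ_[2]) :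
    toZModPow 4 (∑ i, y i ^ 4) = #{i | IsUnit (y i)} := by
  simp only [map_sum, toZModPow_four_pow_four, sum_boole]

end PadicInt

lemma Padic.sum_pow_four_ne_neg_one {ι : Type*} [Fintype ι] (hι : Fintype.card ι ≤ 14)
    (x : ι → ℚ_[2]) : ∑ i, x i ^ 4 ≠ -1 := by
  classical
  intro hx
  obtain ⟨n, y, hy, hprim⟩ := Padic.exists_integral_rescaling x
  have hsum : ∑ i, y i ^ 4 = -((2 ^ (4 * n) : ℕ) : ℤ_[2]) := by
    apply PadicInt.ext
    simp only [PadicInt.coe_sum, PadicInt.coe_pow, PadicInt.coe_neg, PadicInt.coe_natCast, hy,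
      mul_pow, ← pow_mul, ← mul_sum, hx]
    push_cast
    ring
  set k := #{i | IsUnit (y i)}
  have hk : k ≤ 14 := (card_filter_le _ _).trans hι
  have hdvd : 2 ^ 4 ∣ k + 2 ^ (4 * n) := by
    rw [← ZMod.natCast_eq_zero_iff, Nat.cast_add, ← PadicInt.toZModPow_sum_pow_four, hsum,
      map_neg, map_natCast, neg_add_cancel]
  rcases n with _ | n
  · omega
  obtain ⟨i, hi⟩ := hprim.resolve_left n.succ_ne_zero
  have hk0 : 0 < k := card_pos.2 ⟨i, by simpa using hi⟩
  have : 2 ^ 4 ∣ 2 ^ (4 * (n + 1)) := pow_dvd_pow 2 (by omega)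
  omega

/-- `-1` is not a sum of 14 fourth powers in `ℚ₂`. -/
theorem stmt_6 : ¬ ∃ x : Fin 14 → ℚ_[2], (∑ i, x i ^ 4) = -1 :=
  fun ⟨x, hx⟩ ↦ Padic.sum_pow_four_ne_neg_one (by simp) x hx
end

section
/- In the number field K = ℚ(√−2, √−6), −1 is a sum of 3 fourth powers: there exist x, y, z ∈ K with x⁴ + y⁴ + z⁴ = −1. -/
/-!
Let `a = √-2`, `b = √-6`. Using only `a² = -2` and `b² = -6`,
`((a + b)/2)⁴ + ((a - b)/2)⁴ + (a + 1)⁴ + (a - 1)⁴ = 0`; dividing by `(a + 1)⁴` writes `-1` as a sum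
of three fourth powers of elements of `ℚ(a, b)`.
-/

theorem fourth_pow_identity_of_sq_eq {R : Type*} [CommRing R] {a b : R}
    (ha : a ^ 2 = -2) (hb : b ^ 2 = -6) :
    (a + b) ^ 4 + (a - b) ^ 4 + 16 * (a + 1) ^ 4 + 16 * (a - 1) ^ 4 = 0 := by
  linear_combination (34 * a ^ 2 + 52) * ha + (2 * b ^ 2 + 12 * a ^ 2 - 12) * hb

theorem add_one_ne_zero_of_sq_eq_neg_two {K : Type*} [Field K] [CharZero K] {a : K}
    (ha : a ^ 2 = -2) : a + 1 ≠ 0 := by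
  intro h
  rw [eq_neg_of_add_eq_zero_left h] at ha
  norm_num at ha

theorem sum_three_fourth_pow_eq_neg_one {K : Type*} [Field K] [CharZero K] {a b : K}
    (ha : a ^ 2 = -2) (hb : b ^ 2 = -6) :
    ((a + b) / (2 * (a + 1))) ^ 4 + ((a - b) / (2 * (a + 1))) ^ 4 + ((a - 1) / (a + 1)) ^ 4
      = -1 := by
  have hne := add_one_ne_zero_of_sq_eq_neg_two ha
  field_simp
  linear_combination fourth_pow_identity_of_sq_eq ha hb

theorem Subfield.exists_sum_three_fourth_pow_eq_neg_one {K : Type*} [Field K] [CharZero K]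
    {S : Subfield K} {a b : K} (haS : a ∈ S) (hbS : b ∈ S) (ha : a ^ 2 = -2) (hb : b ^ 2 = -6) :
    ∃ x ∈ S, ∃ y ∈ S, ∃ z ∈ S, x ^ 4 + y ^ 4 + z ^ 4 = -1 := by
  have h2S : (2 : K) ∈ S := ofNat_mem S 2
  have hdS : 2 * (a + 1) ∈ S := S.mul_mem h2S (S.add_mem haS S.one_mem)
  exact ⟨_, S.div_mem (S.add_mem haS hbS) hdS, _, S.div_mem (S.sub_mem haS hbS) hdS,
    _, S.div_mem (S.sub_mem haS S.one_mem) (S.add_mem haS S.one_mem),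
    sum_three_fourth_pow_eq_neg_one ha hb⟩

theorem Complex.I_mul_sqrt_sq (r : ℝ) (hr : 0 ≤ r) : (I * (Real.sqrt r : ℂ)) ^ 2 = -r := by
  rw [mul_pow, I_sq, ← ofReal_pow, Real.sq_sqrt hr, neg_one_mul]

/-- In the number field `K = ℚ(√-2, √-6)` (viewed inside `ℂ`, with
`√-2 = i√2` and `√-6 = i√6`), `-1` is a sum of 3 fourth powers. -/
theorem stmt_9 :
    ∃ x y z : ℂ,
      x ∈ Subfield.closure {Complex.I * (Real.sqrt 2 : ℂ), Complex.I * (Real.sqrt 6 : ℂ)} ∧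
      y ∈ Subfield.closure {Complex.I * (Real.sqrt 2 : ℂ), Complex.I * (Real.sqrt 6 : ℂ)} ∧
      z ∈ Subfield.closure {Complex.I * (Real.sqrt 2 : ℂ), Complex.I * (Real.sqrt 6 : ℂ)} ∧
      x ^ 4 + y ^ 4 + z ^ 4 = -1 := by
  have ha : (Complex.I * (Real.sqrt 2 : ℂ)) ^ 2 = -2 := by
    simpa using Complex.I_mul_sqrt_sq 2 (by norm_num)
  have hb : (Complex.I * (Real.sqrt 6 : ℂ)) ^ 2 = -6 := by
    simpa using Complex.I_mul_sqrt_sq 6 (by norm_num)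
  obtain ⟨x, hx, y, hy, z, hz, hsum⟩ := Subfield.exists_sum_three_fourth_pow_eq_neg_one
    (Subfield.subset_closure (Set.mem_insert _ _))
    (Subfield.subset_closure (Set.mem_insert_of_mem _ (Set.mem_singleton _))) ha hb
  exact ⟨x, y, z, hx, hy, hz, hsum⟩
end

section
/- Let K be a field with discrete valuation v, residue field of cardinality 2, and v(2) = 4. If τ ∈ K satisfies v(τ) = 1, then v(τ⁴ + 2) ≥ 5. -/
/-!
Since `v (τ⁴) = 4 = v 2`, the element `u = -τ⁴ / 2` is a unit. The residue field has two
elements, so `u ≡ 1` modulo the maximal ideal, and `τ⁴ + 2 = -2 (u - 1)` has valuation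
`4 + v (u - 1) > 4`.
-/

section MultiplicativeValuation

variable {K : Type*} [Field K] {v : K → WithTop ℤ}

theorem val_one_eq_zero (hv0 : ∀ x : K, v x = ⊤ ↔ x = 0)
    (hvmul : ∀ x y : K, v (x * y) = v x + v y) : v 1 = 0 := by
  have hne : v 1 ≠ ⊤ := fun h => one_ne_zero ((hv0 1).mp h)
  refine WithTop.add_left_cancel hne ?_
  rw [← hvmul, one_mul, add_zero]

theorem val_neg_one_eq_zero (hv0 : ∀ x : K, v x = ⊤ ↔ x = 0)
    (hvmul : ∀ x y : K, v (x * y) = v x + v y) : v (-1) = 0 := by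
  have hsq : v (-1) + v (-1) = 0 := by
    rw [← hvmul, neg_one_mul, neg_neg, val_one_eq_zero hv0 hvmul]
  have hne : v (-1) ≠ ⊤ := fun h => neg_ne_zero.mpr one_ne_zero ((hv0 (-1)).mp h)
  lift v (-1) to ℤ using hne with n
  have : n + n = 0 := by exact_mod_cast hsq
  exact_mod_cast (show n = 0 by omega)

theorem val_pow (hv0 : ∀ x : K, v x = ⊤ ↔ x = 0)
    (hvmul : ∀ x y : K, v (x * y) = v x + v y) (x : K) (n : ℕ) : v (x ^ n) = n • v x := by
  induction n with
  | zero => rw [pow_zero, zero_smul, val_one_eq_zero hv0 hvmul]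
  | succ n ih => rw [pow_succ, hvmul, ih, succ_nsmul]

theorem val_lt_val_add_of_val_eq (hv0 : ∀ x : K, v x = ⊤ ↔ x = 0)
    (hvmul : ∀ x y : K, v (x * y) = v x + v y) (hres : ∀ x : K, v x = 0 → 0 < v (x - 1))
    {x y : K} (hy : y ≠ 0) (hxy : v x = v y) : v y < v (x + y) := by
  have hvy : v y ≠ ⊤ := fun h => hy ((hv0 y).mp h)
  have hvneg := val_neg_one_eq_zero hv0 hvmul
  obtain ⟨u, hu⟩ : ∃ u, u = -x / y := ⟨_, rfl⟩
  have hvu : v u = 0 := by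
    have hyu : y * u = -1 * x := by rw [hu]; field_simp
    refine WithTop.add_left_cancel hvy ?_
    rw [← hvmul, hyu, hvmul, hvneg, zero_add, hxy, add_zero]
  have hsum : x + y = -1 * y * (u - 1) := by rw [hu]; field_simp; ring
  calc v y = v y + 0 := (add_zero _).symm
    _ < v y + v (u - 1) := WithTop.add_lt_add_left hvy (hres u hvu)
    _ = v (x + y) := by rw [hsum, hvmul, hvmul, hvneg, zero_add]

end MultiplicativeValuation

theorem WithTop.coe_add_one_le_of_coe_lt {n : ℤ} {a : WithTop ℤ} (h : (n : WithTop ℤ) < a) :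
    ((n + 1 : ℤ) : WithTop ℤ) ≤ a := by
  induction a using WithTop.recTopCoe with
  | top => exact le_top
  | coe m => exact_mod_cast (show n < m by exact_mod_cast h)

theorem stmt_12_general {K : Type*} [Field K] (v : K → WithTop ℤ)
    (hv0 : ∀ x : K, v x = ⊤ ↔ x = 0)
    (hvmul : ∀ x y : K, v (x * y) = v x + v y)
    (hres : ∀ x : K, v x = 0 → 0 < v (x - 1))
    (h2 : v 2 = ((4 : ℤ) : WithTop ℤ))
    (τ : K) (hτ : v τ = ((1 : ℤ) : WithTop ℤ)) :
    ((5 : ℤ) : WithTop ℤ) ≤ v (τ ^ 4 + 2) := by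
  have h2ne : (2 : K) ≠ 0 := fun h => WithTop.coe_ne_top (h2 ▸ (hv0 2).mpr h)
  have hτ4 : v (τ ^ 4) = v 2 := by
    rw [val_pow hv0 hvmul, hτ, h2]
    norm_cast
  have hlt := val_lt_val_add_of_val_eq hv0 hvmul hres h2ne hτ4
  rw [h2] at hlt
  exact WithTop.coe_add_one_le_of_coe_lt hlt

/-- Let `K` be a field with surjective discrete valuation `v`, residue field of
cardinality 2 (every unit is congruent to 1 modulo the maximal ideal), and
`v 2 = 4`. If `τ ∈ K` satisfies `v τ = 1`, then `v (τ⁴ + 2) ≥ 5`. -/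
theorem stmt_12 {K : Type*} [Field K] (v : K → WithTop ℤ)
    (hv0 : ∀ x : K, v x = ⊤ ↔ x = 0)
    (hvmul : ∀ x y : K, v (x * y) = v x + v y)
    (hvadd : ∀ x y : K, min (v x) (v y) ≤ v (x + y))
    (hsurj : ∀ n : ℤ, ∃ x : K, v x = (n : WithTop ℤ))
    (hres : ∀ x : K, v x = 0 → 0 < v (x - 1))
    (h2 : v 2 = ((4 : ℤ) : WithTop ℤ))
    (τ : K) (hτ : v τ = ((1 : ℤ) : WithTop ℤ)) :
    ((5 : ℤ) : WithTop ℤ) ≤ v (τ ^ 4 + 2) :=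
  stmt_12_general v hv0 hvmul hres h2 τ hτ
end

section
/- Let K be a complete discretely valued field with normalized valuation v, residue field of cardinality 2, and v(2) = 4, and let τ be a uniformizer (v(τ) = 1). If v(τ⁴ + 2) ≥ 13, then −1 is a sum of 2 fourth powers in K. -/
/-- Newton iteration sequence for solving `4z + 6z² + 4z³ + z⁴ = T`. -/
private def newt {K : Type*} [Field K] (T : K) : ℕ → K := fun n =>
  Nat.rec 0 (fun _ w => (T - 6*w^2 - 4*w^3 - w^4)/4) n

private lemma withtop_top_of_all_le (w : WithTop ℤ)
    (hw : ∀ n : ℕ, ((n : ℤ) : WithTop ℤ) ≤ w) : w = ⊤ := by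
  induction w using WithTop.recTopCoe with
  | top => rfl
  | coe a =>
    exfalso
    have := WithTop.coe_le_coe.mp (hw (a.toNat + 1))
    omega

/-- Let `K` be a complete discretely valued field with normalized (surjective)
valuation `v`, residue field of cardinality 2, and `v 2 = 4`, and let `τ` be a
uniformizer. If `v (τ⁴ + 2) ≥ 13`, then `-1` is a sum of 2 fourth powers in `K`.
Completeness is expressed by the convergence of Cauchy sequences with respect
to `v`. -/
theorem stmt_13 {K : Type*} [Field K] (v : K → WithTop ℤ)
    (hv0 : ∀ x : K, v x = ⊤ ↔ x = 0)
    (hvmul : ∀ x y : K, v (x * y) = v x + v y)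
    (hvadd : ∀ x y : K, min (v x) (v y) ≤ v (x + y))
    (hsurj : ∀ n : ℤ, ∃ x : K, v x = (n : WithTop ℤ))
    (hres : ∀ x : K, v x = 0 → 0 < v (x - 1))
    (hcomplete : ∀ f : ℕ → K,
      (∀ n : ℕ, ∃ N : ℕ, ∀ i ≥ N, ∀ j ≥ N, ((n : ℤ) : WithTop ℤ) ≤ v (f i - f j)) →
      ∃ L : K, ∀ n : ℕ, ∃ N : ℕ, ∀ i ≥ N, ((n : ℤ) : WithTop ℤ) ≤ v (f i - L))
    (h2 : v 2 = ((4 : ℤ) : WithTop ℤ))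
    (τ : K) (hτ : v τ = ((1 : ℤ) : WithTop ℤ))
    (h : ((13 : ℤ) : WithTop ℤ) ≤ v (τ ^ 4 + 2)) :
    ∃ x y : K, x ^ 4 + y ^ 4 = -1 := by
  -- basic facts about v
  have hv1 : v 1 = 0 := by
    have h1 : v 1 ≠ ⊤ := by simp [hv0]
    have he := hvmul 1 1
    rw [one_mul] at he
    lift v 1 to ℤ using h1 with a
    have : a = a + a := by exact_mod_cast he
    have : a = 0 := by omega
    simp [this]
  have hvm1 : v (-1 : K) = 0 := by
    have h1 : v (-1 : K) ≠ ⊤ := by simp [hv0]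
    have he := hvmul (-1 : K) (-1)
    rw [neg_mul_neg, one_mul, hv1] at he
    lift v (-1 : K) to ℤ using h1 with a
    have : (0 : ℤ) = a + a := by exact_mod_cast he
    have : a = 0 := by omega
    simp [this]
  have hvneg : ∀ x : K, v (-x) = v x := by
    intro x
    rw [show -x = -1 * x by ring, hvmul, hvm1, zero_add]
  have hvsub : ∀ x y : K, min (v x) (v y) ≤ v (x - y) := by
    intro x y
    rw [sub_eq_add_neg]
    simpa [hvneg] using hvadd x (-y)
  have h2ne : (2 : K) ≠ 0 := by
    intro hh
    rw [hh, (hv0 0).mpr rfl] at h2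
    exact (by simp : (⊤ : WithTop ℤ) ≠ ((4:ℤ) : WithTop ℤ)) h2
  have h4ne : (4 : K) ≠ 0 := by
    intro hh
    exact h2ne (by
      have : (2:K) * 2 = 0 := by rw [show (2:K)*2 = 4 by norm_num, hh]
      rcases mul_eq_zero.mp this with h' | h' <;> exact h')
  have hv4 : v 4 = ((8 : ℤ) : WithTop ℤ) := by
    rw [show (4:K) = 2 * 2 by norm_num, hvmul, h2, ← WithTop.coe_add]
    norm_num
  have hv3 : v 3 = 0 := by
    have hge : (0 : WithTop ℤ) ≤ v 3 := by
      have := hvadd 1 2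
      rw [show (1:K) + 2 = 3 by norm_num, hv1, h2] at this
      refine le_trans ?_ this
      simp [le_min_iff]
    have hle : v 3 ≤ 0 := by
      have := hvadd 3 (-2)
      rw [show (3:K) + (-2) = 1 by norm_num, hv1, hvneg, h2] at this
      rcases min_le_iff.mp this with h' | h'
      · exact h'
      · exfalso
        exact absurd h' (by simp)
    exact le_antisymm hle hge
  have hv6 : v 6 = ((4 : ℤ) : WithTop ℤ) := by
    rw [show (6:K) = 2 * 3 by norm_num, hvmul, h2, hv3, add_zero]
  have hvinv4 : v (4⁻¹ : K) = ((-8 : ℤ) : WithTop ℤ) := by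
    have he := hvmul 4 (4⁻¹ : K)
    rw [mul_inv_cancel₀ h4ne, hv1, hv4] at he
    have hne : v (4⁻¹ : K) ≠ ⊤ := by
      simp [hv0, inv_eq_zero, h4ne]
    lift v (4⁻¹ : K) to ℤ using hne with a
    have : (0 : ℤ) = 8 + a := by exact_mod_cast he
    have : a = -8 := by omega
    simp [this]
  -- monotonicity helpers
  have hcoe : ∀ a b : ℤ, a ≤ b → (a : WithTop ℤ) ≤ (b : WithTop ℤ) :=
    fun a b hab => WithTop.coe_le_coe.mpr hab
  have hwk : ∀ (a b : ℤ) (x : K), a ≤ b → (b : WithTop ℤ) ≤ v x → (a : WithTop ℤ) ≤ v x :=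
    fun a b x hab hb => le_trans (hcoe a b hab) hb
  have hmul_ge : ∀ (a b : ℤ) (x y : K), (a : WithTop ℤ) ≤ v x → (b : WithTop ℤ) ≤ v y →
      ((a + b : ℤ) : WithTop ℤ) ≤ v (x * y) := by
    intro a b x y hx hy
    rw [hvmul, WithTop.coe_add]
    exact add_le_add hx hy
  have hadd_ge : ∀ (a : ℤ) (x y : K), (a : WithTop ℤ) ≤ v x → (a : WithTop ℤ) ≤ v y →
      (a : WithTop ℤ) ≤ v (x + y) :=
    fun a x y hx hy => le_trans (le_min hx hy) (hvadd x y)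
  have hsub_ge : ∀ (a : ℤ) (x y : K), (a : WithTop ℤ) ≤ v x → (a : WithTop ℤ) ≤ v y →
      (a : WithTop ℤ) ≤ v (x - y) :=
    fun a x y hx hy => le_trans (le_min hx hy) (hvsub x y)
  have hpow_ge : ∀ (a : ℤ) (x : K) (n : ℕ), (a : WithTop ℤ) ≤ v x →
      (((n : ℤ) * a : ℤ) : WithTop ℤ) ≤ v (x ^ n) := by
    intro a x n hx
    induction n with
    | zero => simp [hv1]
    | succ n ih =>
      rw [pow_succ, show (((n+1 : ℕ):ℤ) * a : ℤ) = (n:ℤ)*a + a by push_cast; ring,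
        WithTop.coe_add, hvmul]
      exact add_le_add ih hx
  have hdiv4 : ∀ (a : ℤ) (x : K), ((a + 8 : ℤ) : WithTop ℤ) ≤ v x →
      ((a : ℤ) : WithTop ℤ) ≤ v (x / 4) := by
    intro a x hx
    rw [div_eq_mul_inv, hvmul, hvinv4]
    calc ((a : ℤ) : WithTop ℤ) = ((a + 8 : ℤ) : WithTop ℤ) + ((-8 : ℤ) : WithTop ℤ) := by
          rw [← WithTop.coe_add]; norm_num
      _ ≤ v x + ((-8 : ℤ) : WithTop ℤ) := add_le_add hx le_rfl
  -- the target constant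
  set T : K := -(τ^4 + 2) with hT
  have hvT : ((13 : ℤ) : WithTop ℤ) ≤ v T := by rw [hT, hvneg]; exact h
  -- one Newton step maps the ball v ≥ 5 to itself
  have keyA : ∀ b : K, ((5:ℤ) : WithTop ℤ) ≤ v b →
      ((5:ℤ) : WithTop ℤ) ≤ v ((T - 6*b^2 - 4*b^3 - b^4)/4) := by
    intro b hb
    refine hdiv4 5 _ ?_
    norm_num
    refine hsub_ge _ _ _ (hsub_ge _ _ _ (hsub_ge _ _ _ hvT ?_) ?_) ?_
    · refine hwk 13 14 _ (by norm_num) ?_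
      have h' := hmul_ge 4 10 6 (b^2) (le_of_eq hv6.symm)
        (by have := hpow_ge 5 b 2 hb; norm_num at this; exact this)
      norm_num at h'; exact h'
    · refine hwk 13 23 _ (by norm_num) ?_
      have h' := hmul_ge 8 15 4 (b^3) (le_of_eq hv4.symm)
        (by have := hpow_ge 5 b 3 hb; norm_num at this; exact this)
      norm_num at h'; exact h'
    · refine hwk 13 20 _ (by norm_num) ?_
      have := hpow_ge 5 b 4 hb; norm_num at this; exact this
  -- convenient squares/cubes bounds
  have hsq10 : ∀ x : K, ((5:ℤ) : WithTop ℤ) ≤ v x → ((10:ℤ) : WithTop ℤ) ≤ v (x^2) := by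
    intro x hx; have := hpow_ge 5 x 2 hx; norm_num at this; exact this
  have hmul10 : ∀ x y : K, ((5:ℤ) : WithTop ℤ) ≤ v x → ((5:ℤ) : WithTop ℤ) ≤ v y →
      ((10:ℤ) : WithTop ℤ) ≤ v (x*y) := by
    intro x y hx hy; have := hmul_ge 5 5 x y hx hy; norm_num at this; exact this
  -- the Newton step is a contraction on the ball v ≥ 5
  have hdiff : ∀ a b : K, ((5:ℤ) : WithTop ℤ) ≤ v a → ((5:ℤ) : WithTop ℤ) ≤ v b →
      ∀ d : ℤ, (d : WithTop ℤ) ≤ v (a - b) →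
      ((d + 1 : ℤ) : WithTop ℤ) ≤
        v ((T - 6*a^2 - 4*a^3 - a^4)/4 - (T - 6*b^2 - 4*b^3 - b^4)/4) := by
    intro a b ha hb d hd
    have heq : (T - 6*a^2 - 4*a^3 - a^4)/4 - (T - 6*b^2 - 4*b^3 - b^4)/4
        = ((b - a) * (6*(a+b) + 4*(a^2+a*b+b^2) + (a^3+a^2*b+a*b^2+b^3))) / 4 := by
      field_simp; ring
    rw [heq]
    refine hdiv4 (d+1) _ ?_
    have h1 : (d : WithTop ℤ) ≤ v (b - a) := by
      rw [show b - a = -(a-b) by ring, hvneg]; exact hd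
    have hF : ((9:ℤ) : WithTop ℤ) ≤
        v (6*(a+b) + 4*(a^2+a*b+b^2) + (a^3+a^2*b+a*b^2+b^3)) := by
      refine hadd_ge _ _ _ (hadd_ge _ _ _ ?_ ?_) ?_
      · have h' := hmul_ge 4 5 6 (a+b) (le_of_eq hv6.symm) (hadd_ge 5 a b ha hb)
        norm_num at h'; exact h'
      · refine hwk 9 18 _ (by norm_num) ?_
        have h' := hmul_ge 8 10 4 (a^2+a*b+b^2) (le_of_eq hv4.symm)
          (hadd_ge 10 _ _ (hadd_ge 10 _ _ (hsq10 a ha) (hmul10 a b ha hb)) (hsq10 b hb))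
        norm_num at h'; exact h'
      · refine hwk 9 15 _ (by norm_num) ?_
        refine hadd_ge _ _ _ (hadd_ge _ _ _ (hadd_ge _ _ _ ?_ ?_) ?_) ?_
        · have := hpow_ge 5 a 3 ha; norm_num at this; exact this
        · have h' := hmul_ge 10 5 (a^2) b (hsq10 a ha) hb; norm_num at h'; exact h'
        · have h' := hmul_ge 5 10 a (b^2) ha (hsq10 b hb); norm_num at h'; exact h'
        · have := hpow_ge 5 b 3 hb; norm_num at this; exact this
    have h' := hmul_ge d 9 _ _ h1 hF
    rw [show (d + 1 + 8 : ℤ) = d + 9 by ring]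
    exact h'
  -- the Newton sequence
  set z : ℕ → K := newt T with hz
  have hz0 : z 0 = 0 := rfl
  have hzstep : ∀ n : ℕ, z (n+1) = (T - 6*(z n)^2 - 4*(z n)^3 - (z n)^4)/4 := fun n => rfl
  have hA : ∀ n : ℕ, ((5:ℤ) : WithTop ℤ) ≤ v (z n) := by
    intro n
    induction n with
    | zero => rw [hz0, (hv0 0).mpr rfl]; exact le_top
    | succ n ih => rw [hzstep]; exact keyA _ ih
  have hB : ∀ n : ℕ, (((n:ℤ) + 5 : ℤ) : WithTop ℤ) ≤ v (z (n+1) - z n) := by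
    intro n
    induction n with
    | zero =>
      rw [hz0, sub_zero]
      have h' := keyA (z 0) (hA 0)
      rw [← hzstep 0] at h'
      norm_num
      exact h'
    | succ n ih =>
      rw [hzstep (n+1), hzstep n,
        show (((n+1:ℕ):ℤ) + 5 : ℤ) = ((n:ℤ) + 5) + 1 by push_cast; ring]
      exact hdiff (z (n+1)) (z n) (hA _) (hA _) ((n:ℤ)+5) ih
  have hC : ∀ i m : ℕ, (((i:ℤ) + 5 : ℤ) : WithTop ℤ) ≤ v (z (i+m) - z i) := by
    intro i m
    induction m with
    | zero => rw [Nat.add_zero, sub_self, (hv0 0).mpr rfl]; exact le_top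
    | succ m ih =>
      rw [show z (i+(m+1)) - z i = (z ((i+m)+1) - z (i+m)) + (z (i+m) - z i) by
        rw [show i+(m+1) = (i+m)+1 from rfl]; ring]
      refine hadd_ge _ _ _ ?_ ih
      exact hwk _ (((i+m:ℕ):ℤ) + 5) _ (by push_cast; omega) (hB (i+m))
  have hCauchy : ∀ n : ℕ, ∃ N : ℕ, ∀ i ≥ N, ∀ j ≥ N,
      ((n : ℤ) : WithTop ℤ) ≤ v (z i - z j) := by
    intro n
    refine ⟨n, fun i hi j hj => ?_⟩
    rcases le_total j i with hji | hij
    · obtain ⟨m, rfl⟩ := Nat.exists_eq_add_of_le hji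
      exact hwk _ ((j:ℤ) + 5) _ (by omega) (hC j m)
    · obtain ⟨m, rfl⟩ := Nat.exists_eq_add_of_le hij
      rw [show z i - z (i+m) = -(z (i+m) - z i) by ring, hvneg]
      exact hwk _ ((i:ℤ) + 5) _ (by omega) (hC i m)
  obtain ⟨L, hL⟩ := hcomplete z hCauchy
  have hvL : ((5:ℤ) : WithTop ℤ) ≤ v L := by
    obtain ⟨N, hN⟩ := hL 5
    have h1 := hN N le_rfl
    norm_num at h1
    rw [show L = z N - (z N - L) by ring]
    exact hsub_ge _ _ _ (hA N) h1
  -- value of the polynomial along the sequence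
  have hgz : ∀ n : ℕ, (((n:ℤ) + 13 : ℤ) : WithTop ℤ) ≤
      v ((z n)^4 + 4*(z n)^3 + 6*(z n)^2 + 4*(z n) - T) := by
    intro n
    have he : (z n)^4 + 4*(z n)^3 + 6*(z n)^2 + 4*(z n) - T = 4 * (z n - z (n+1)) := by
      rw [hzstep n]; field_simp; ring
    rw [he]
    have h1 : (((n:ℤ) + 5 : ℤ) : WithTop ℤ) ≤ v (z n - z (n+1)) := by
      rw [show z n - z (n+1) = -(z (n+1) - z n) by ring, hvneg]; exact hB n
    have h' := hmul_ge 8 ((n:ℤ)+5) 4 _ (le_of_eq hv4.symm) h1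
    rw [show ((n:ℤ) + 13 : ℤ) = 8 + ((n:ℤ) + 5) by ring]
    exact h'
  -- continuity estimate
  have hgdiff : ∀ b : K, ((5:ℤ) : WithTop ℤ) ≤ v b → ∀ d : ℤ,
      (d : WithTop ℤ) ≤ v (L - b) →
      ((d + 8 : ℤ) : WithTop ℤ) ≤
        v ((L^4 + 4*L^3 + 6*L^2 + 4*L - T) - (b^4 + 4*b^3 + 6*b^2 + 4*b - T)) := by
    intro b hb d hd
    rw [show (L^4 + 4*L^3 + 6*L^2 + 4*L - T) - (b^4 + 4*b^3 + 6*b^2 + 4*b - T)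
        = (L - b) * ((L^3 + L^2*b + L*b^2 + b^3) + 4*(L^2 + L*b + b^2) + 6*(L+b) + 4) by
      ring]
    have hF : ((8:ℤ) : WithTop ℤ) ≤
        v ((L^3 + L^2*b + L*b^2 + b^3) + 4*(L^2 + L*b + b^2) + 6*(L+b) + 4) := by
      refine hadd_ge _ _ _ (hadd_ge _ _ _ (hadd_ge _ _ _ ?_ ?_) ?_) (le_of_eq hv4.symm)
      · refine hwk 8 15 _ (by norm_num) ?_
        refine hadd_ge _ _ _ (hadd_ge _ _ _ (hadd_ge _ _ _ ?_ ?_) ?_) ?_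
        · have := hpow_ge 5 L 3 hvL; norm_num at this; exact this
        · have h' := hmul_ge 10 5 (L^2) b (hsq10 L hvL) hb; norm_num at h'; exact h'
        · have h' := hmul_ge 5 10 L (b^2) hvL (hsq10 b hb); norm_num at h'; exact h'
        · have := hpow_ge 5 b 3 hb; norm_num at this; exact this
      · refine hwk 8 18 _ (by norm_num) ?_
        have h' := hmul_ge 8 10 4 (L^2 + L*b + b^2) (le_of_eq hv4.symm)
          (hadd_ge 10 _ _ (hadd_ge 10 _ _ (hsq10 L hvL) (hmul10 L b hvL hb)) (hsq10 b hb))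
        norm_num at h'; exact h'
      · refine hwk 8 9 _ (by norm_num) ?_
        have h' := hmul_ge 4 5 6 (L+b) (le_of_eq hv6.symm) (hadd_ge 5 L b hvL hb)
        norm_num at h'; exact h'
    exact hmul_ge d 8 _ _ hd hF
  -- the limit is a root
  have hgL : L^4 + 4*L^3 + 6*L^2 + 4*L - T = 0 := by
    rw [← hv0]
    apply withtop_top_of_all_le
    intro n
    obtain ⟨N, hN⟩ := hL n
    have h1 : ((n:ℤ) : WithTop ℤ) ≤ v (z (max N n) - L) := hN (max N n) (le_max_left _ _)
    have h1' : ((n:ℤ) : WithTop ℤ) ≤ v (L - z (max N n)) := by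
      rw [show L - z (max N n) = -(z (max N n) - L) by ring, hvneg]; exact h1
    have h2 := hgdiff (z (max N n)) (hA _) (n:ℤ) h1'
    rw [show L^4 + 4*L^3 + 6*L^2 + 4*L - T
        = ((L^4 + 4*L^3 + 6*L^2 + 4*L - T)
            - ((z (max N n))^4 + 4*(z (max N n))^3 + 6*(z (max N n))^2 + 4*(z (max N n)) - T))
          + ((z (max N n))^4 + 4*(z (max N n))^3 + 6*(z (max N n))^2 + 4*(z (max N n)) - T) by
      ring]
    refine hadd_ge _ _ _ (hwk _ ((n:ℤ) + 8) _ (by omega) h2)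
      (hwk _ (((max N n : ℕ):ℤ) + 13) _ ?_ (hgz _))
    have : (n:ℤ) ≤ ((max N n : ℕ):ℤ) := by exact_mod_cast le_max_right N n
    omega
  refine ⟨1 + L, τ, ?_⟩
  rw [hT] at hgL
  linear_combination hgL
end

section
/- Let K be a complete discretely valued field with normalized valuation v, residue field of cardinality 2, and v(2) = 4, and let τ be a uniformizer. If v(τ⁴ + 2) = 12, then −1 is a sum of 3 fourth powers in K. -/
/-!
Since the residue field has two elements, `τ⁴ + 2` and `τ¹²` (both of valuation `12`) agree to
order `13`, so `c = -1 - τ⁴ - (τ³)⁴` satisfies `v (c - 1) = v (2 + τ⁴ + τ¹²) > 12 = v 8`.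
Such a `c` is a fourth power: writing `x = 1 + 2y` gives `x⁴ - c = 8 (b + y + 3y² + 4y³ + 2y⁴)`
with `b = (1 - c) / 8` of positive valuation, and this integral polynomial in `y` has a simple
root modulo the maximal ideal at `y = 0`, which Newton's iteration lifts to a root by
completeness (Hensel's lemma).
-/

open Polynomial

theorem WithTop.coe_add_one_le_of_lt {a : ℤ} {x : WithTop ℤ} (h : (a : WithTop ℤ) < x) :
    ((a + 1 : ℤ) : WithTop ℤ) ≤ x := by
  cases x with
  | top => exact le_top
  | coe b => exact WithTop.coe_le_coe.2 (WithTop.coe_lt_coe.1 h)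

namespace AddValuation

variable {K : Type*} [Field K] (v : AddValuation K (WithTop ℤ))

def integer : Subring K where
  carrier := {x | 0 ≤ v x}
  mul_mem' {x y} hx hy := by simpa [map_mul] using add_nonneg hx hy
  one_mem' := by simp [map_one]
  add_mem' hx hy := v.map_le_add hx hy
  zero_mem' := by simp [map_zero]
  neg_mem' {x} hx := by simpa [map_neg] using hx

def IsCauchy (g : ℕ → K) : Prop :=
  ∀ n : ℕ, ∃ N, ∀ i ≥ N, ∀ j ≥ N, ((n : ℤ) : WithTop ℤ) ≤ v (g i - g j)

def HasLimit (g : ℕ → K) (L : K) : Prop :=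
  ∀ n : ℕ, ∃ N, ∀ i ≥ N, ((n : ℤ) : WithTop ℤ) ≤ v (g i - L)

def IsComplete : Prop :=
  ∀ g : ℕ → K, v.IsCauchy g → ∃ L, v.HasLimit g L

variable {v}

theorem eq_zero_of_forall_le {x : K} (h : ∀ n : ℕ, ((n : ℤ) : WithTop ℤ) ≤ v x) : x = 0 := by
  refine (v.top_iff).1 (WithTop.eq_top_iff_forall_ge.2 fun b => ?_)
  exact le_trans (WithTop.coe_le_coe.2 (Int.self_le_toNat b)) (h b.toNat)

theorem isCauchy_of_le_sub_succ {g : ℕ → K}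
    (h : ∀ k : ℕ, ((k : ℤ) : WithTop ℤ) ≤ v (g (k + 1) - g k)) : v.IsCauchy g := by
  have hfar : ∀ i k : ℕ, ((i : ℤ) : WithTop ℤ) ≤ v (g (i + k) - g i) := by
    intro i k
    induction k with
    | zero => simp
    | succ k ih =>
      rw [← add_assoc, ← sub_add_sub_cancel _ (g (i + k))]
      refine v.map_le_add (le_trans ?_ (h (i + k))) ih
      exact_mod_cast Nat.le_add_right i k
  intro n
  refine ⟨n, fun i hi j hj => ?_⟩
  obtain ⟨k, rfl⟩ := Nat.exists_eq_add_of_le hi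
  obtain ⟨l, rfl⟩ := Nat.exists_eq_add_of_le hj
  rw [← sub_sub_sub_cancel_right _ _ (g n)]
  exact v.map_le_sub (hfar n k) (hfar n l)

theorem exists_newton_step (f : v.integer[X]) (z : v.integer)
    (hz : v ↑(f.derivative.eval z) = 0) {n : ℤ} (hn : 0 < n)
    (hf : (n : WithTop ℤ) ≤ v ↑(f.eval z)) :
    ∃ z' : v.integer, (n : WithTop ℤ) ≤ v (z' - z : v.integer) ∧
      v ↑(f.derivative.eval z') = 0 ∧ ((n + 1 : ℤ) : WithTop ℤ) ≤ v ↑(f.eval z') := by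
  set d : K := ↑(f.derivative.eval z)
  have hd : d ≠ 0 := v.ne_top_iff.1 (by simp [d, hz])
  set u : K := -↑(f.eval z) / d
  have hun : (n : WithTop ℤ) ≤ v u := by simpa [u, d, map_div, hz] using hf
  have huO : u ∈ v.integer := le_trans (WithTop.coe_le_coe.2 hn.le) hun
  let u' : v.integer := ⟨u, huO⟩
  have hlin : f.derivative.eval z * u' = -f.eval z := by
    ext; simp [u', u, d, mul_div_cancel₀ _ hd]
  refine ⟨z + u', by simpa using hun, ?_, ?_⟩
  · obtain ⟨q, hq⟩ := sub_dvd_eval_sub (z + u') z f.derivative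
    refine (v.map_eq_of_lt_sub ?_).trans hz
    rw [add_sub_cancel_left] at hq
    rw [hz, ← AddSubgroupClass.coe_sub, hq, Subring.coe_mul, map_mul]
    exact lt_of_lt_of_le (WithTop.coe_lt_coe.2 hn) (le_add_of_le_of_nonneg hun q.2)
  · -- Taylor expansion: the linear term cancels, leaving `f (z + u) = k * u ^ 2`.
    obtain ⟨k, hk⟩ := binomExpansion f z u'
    rw [hk, add_assoc, hlin, add_neg_cancel_left, Subring.coe_mul, map_mul]
    refine le_add_of_nonneg_of_le k.2 ?_
    rw [Subring.coe_pow, map_pow, two_nsmul]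
    calc ((n + 1 : ℤ) : WithTop ℤ) ≤ ((n + n : ℤ) : WithTop ℤ) := WithTop.coe_le_coe.2 (by omega)
      _ ≤ v u + v u := by rw [WithTop.coe_add]; exact add_le_add hun hun

theorem exists_isRoot_of_isComplete (hv : v.IsComplete) (f : v.integer[X]) (a : v.integer)
    (hfa : 0 < v ↑(f.eval a)) (hfa' : v ↑(f.derivative.eval a) = 0) :
    ∃ x : v.integer, f.IsRoot x := by
  choose! next hnext_sub hnext_deriv hnext_eval using
    fun (k : ℕ) (z : v.integer) => exists_newton_step (n := k + 1) f z
  let g : ℕ → v.integer := fun k => Nat.rec a (fun k z => next k z) k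
  have hg : ∀ k : ℕ, v ↑(f.derivative.eval (g k)) = 0 ∧
      ((k + 1 : ℤ) : WithTop ℤ) ≤ v ↑(f.eval (g k)) := by
    intro k
    induction k with
    | zero => exact ⟨hfa', by simpa [g] using WithTop.coe_add_one_le_of_lt hfa⟩
    | succ k ih =>
      refine ⟨hnext_deriv _ _ ih.1 (by omega) ih.2, ?_⟩
      push_cast
      exact hnext_eval _ _ ih.1 (by omega) ih.2
  have hcauchy : v.IsCauchy (fun k => (g k).val) := by
    refine isCauchy_of_le_sub_succ fun k => ?_
    have hstep := hnext_sub _ _ (hg k).1 (by omega) (hg k).2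
    exact le_trans (WithTop.coe_le_coe.2 (by omega)) hstep
  obtain ⟨L, hL⟩ := hv _ hcauchy
  have hLO : L ∈ v.integer := by
    obtain ⟨N, hN⟩ := hL 0
    rw [← sub_sub_cancel (g N).val L]
    exact v.map_le_sub (g N).2 (by simpa using hN N le_rfl)
  refine ⟨⟨L, hLO⟩, Subtype.ext (eq_zero_of_forall_le (v := v) fun n => ?_)⟩
  obtain ⟨N, hN⟩ := hL n
  set i := max N n
  obtain ⟨q, hq⟩ := sub_dvd_eval_sub (g i) ⟨L, hLO⟩ f
  rw [← sub_sub_cancel (f.eval (g i)).val (f.eval ⟨L, hLO⟩).val, ← AddSubgroupClass.coe_sub, hq]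
  refine v.map_le_sub (le_trans (WithTop.coe_le_coe.2 ?_) (hg i).2) ?_
  · have := le_max_right N n
    omega
  · rw [Subring.coe_mul, map_mul]
    exact le_add_of_le_of_nonneg (hN i (le_max_left _ _)) q.2

theorem exists_pow_four_eq_of_lt (hv : v.IsComplete) {c : K} (hc : v 8 < v (c - 1)) :
    ∃ x : K, x ^ 4 = c := by
  have h8 : (8 : K) ≠ 0 := v.ne_top_iff.1 (ne_top_of_lt hc)
  set b : K := (1 - c) / 8
  have hb : 0 < v b := by
    rw [map_div, map_sub_swap]
    exact LinearOrderedAddCommGroupWithTop.sub_pos.2 (Or.inl hc)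
  let f : v.integer[X] := C ⟨b, hb.le⟩ + X + C 3 * X ^ 2 + C 4 * X ^ 3 + C 2 * X ^ 4
  obtain ⟨y, hy⟩ := exists_isRoot_of_isComplete hv f 0 (by simpa [f] using hb) (by simp [f])
  have hyK : b + y + 3 * y ^ 2 + 4 * y ^ 3 + 2 * y ^ 4 = (0 : K) := by
    have := congrArg Subtype.val hy.eq_zero
    simp only [f, eval_add, eval_mul, eval_pow, eval_C, eval_X] at this
    push_cast at this
    exact this
  refine ⟨1 + 2 * y, ?_⟩
  have hb' : 8 * b = 1 - c := mul_div_cancel₀ _ h8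
  linear_combination 8 * hyK - hb'

theorem lt_map_sub_of_map_eq (hres : ∀ x : K, v x = 0 → 0 < v (x - 1)) {x y : K} (hy : y ≠ 0)
    (h : v x = v y) : v y < v (x - y) := by
  have hy' : v y ≠ ⊤ := v.ne_top_iff.2 hy
  have hxy : v (x / y) = 0 := by
    rw [map_div, h, LinearOrderedAddCommGroupWithTop.sub_self_eq_zero_of_ne_top hy']
  rw [← div_mul_cancel₀ x hy, ← sub_one_mul, map_mul, add_comm]
  simpa using (add_lt_add_iff_right_of_ne_top hy').2 (hres _ hxy)

theorem map_eight_lt_map_two_add_pow_four_add_pow_twelve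
    (hres : ∀ x : K, v x = 0 → 0 < v (x - 1)) {τ : K} (hτ : v τ = ((1 : ℤ) : WithTop ℤ))
    (h2 : v 2 = ((4 : ℤ) : WithTop ℤ)) (h : v (τ ^ 4 + 2) = ((12 : ℤ) : WithTop ℤ)) :
    v 8 < v (2 + τ ^ 4 + τ ^ 12) := by
  have hτ12 : v (τ ^ 12) = ((12 : ℤ) : WithTop ℤ) := by
    rw [map_pow, hτ, ← WithTop.coe_nsmul]; rfl
  have h8 : v 8 = ((12 : ℤ) : WithTop ℤ) := by
    rw [show (8 : K) = 2 ^ 3 by norm_num, map_pow, h2, ← WithTop.coe_nsmul]; rfl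
  have hτ0 : τ ^ 12 ≠ 0 := v.ne_top_iff.1 (by simp [hτ12])
  have hsub := lt_map_sub_of_map_eq hres hτ0 (h.trans hτ12.symm)
  have h2τ : v (τ ^ 12) < v (2 * τ ^ 12) := by
    rw [map_mul, h2, hτ12, ← WithTop.coe_add]
    exact WithTop.coe_lt_coe.2 (by norm_num)
  rw [h8, ← hτ12, show 2 + τ ^ 4 + τ ^ 12 = (τ ^ 4 + 2 - τ ^ 12) + 2 * τ ^ 12 by ring]
  exact v.map_lt_add hsub h2τ

end AddValuation

theorem stmt_14_general {K : Type*} [Field K] (v : K → WithTop ℤ)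
    (hv0 : ∀ x : K, v x = ⊤ ↔ x = 0)
    (hvmul : ∀ x y : K, v (x * y) = v x + v y)
    (hvadd : ∀ x y : K, min (v x) (v y) ≤ v (x + y))
    (hres : ∀ x : K, v x = 0 → 0 < v (x - 1))
    (hcomplete : ∀ f : ℕ → K,
      (∀ n : ℕ, ∃ N : ℕ, ∀ i ≥ N, ∀ j ≥ N, ((n : ℤ) : WithTop ℤ) ≤ v (f i - f j)) →
      ∃ L : K, ∀ n : ℕ, ∃ N : ℕ, ∀ i ≥ N, ((n : ℤ) : WithTop ℤ) ≤ v (f i - L))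
    (h2 : v 2 = ((4 : ℤ) : WithTop ℤ))
    (τ : K) (hτ : v τ = ((1 : ℤ) : WithTop ℤ))
    (h : v (τ ^ 4 + 2) = ((12 : ℤ) : WithTop ℤ)) :
    ∃ x y z : K, x ^ 4 + y ^ 4 + z ^ 4 = -1 := by
  have hv1 : v 1 = 0 := by
    have h1 : v 1 ≠ ⊤ := fun h1 => one_ne_zero ((hv0 1).1 h1)
    rw [← add_right_inj_of_ne_top h1, add_zero, ← hvmul, one_mul]
  let w : AddValuation K (WithTop ℤ) := AddValuation.of v ((hv0 0).2 rfl) hv1 hvadd hvmul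
  have hlt : w 8 < w (-1 - τ ^ 4 - (τ ^ 3) ^ 4 - 1) := by
    rw [show -1 - τ ^ 4 - (τ ^ 3) ^ 4 - 1 = -(2 + τ ^ 4 + τ ^ 12) by ring, w.map_neg]
    exact w.map_eight_lt_map_two_add_pow_four_add_pow_twelve hres hτ h2 h
  obtain ⟨x, hx⟩ := w.exists_pow_four_eq_of_lt hcomplete hlt
  exact ⟨x, τ, τ ^ 3, by linear_combination hx⟩

/-- Let `K` be a complete discretely valued field with normalized (surjective)
valuation `v`, residue field of cardinality 2, and `v 2 = 4`, and let `τ` be a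
uniformizer. If `v (τ⁴ + 2) = 12`, then `-1` is a sum of 3 fourth powers in `K`.
Completeness is expressed by the convergence of Cauchy sequences with respect
to `v`. -/
theorem stmt_14 {K : Type*} [Field K] (v : K → WithTop ℤ)
    (hv0 : ∀ x : K, v x = ⊤ ↔ x = 0)
    (hvmul : ∀ x y : K, v (x * y) = v x + v y)
    (hvadd : ∀ x y : K, min (v x) (v y) ≤ v (x + y))
    (hsurj : ∀ n : ℤ, ∃ x : K, v x = (n : WithTop ℤ))
    (hres : ∀ x : K, v x = 0 → 0 < v (x - 1))
    (hcomplete : ∀ f : ℕ → K,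
      (∀ n : ℕ, ∃ N : ℕ, ∀ i ≥ N, ∀ j ≥ N, ((n : ℤ) : WithTop ℤ) ≤ v (f i - f j)) →
      ∃ L : K, ∀ n : ℕ, ∃ N : ℕ, ∀ i ≥ N, ((n : ℤ) : WithTop ℤ) ≤ v (f i - L))
    (h2 : v 2 = ((4 : ℤ) : WithTop ℤ))
    (τ : K) (hτ : v τ = ((1 : ℤ) : WithTop ℤ))
    (h : v (τ ^ 4 + 2) = ((12 : ℤ) : WithTop ℤ)) :
    ∃ x y z : K, x ^ 4 + y ^ 4 + z ^ 4 = -1 :=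
  stmt_14_general v hv0 hvmul hvadd hres hcomplete h2 τ hτ h
end

section
/- Let K be a finite extension of ℚ₂ with ramification index e (so that the normalized valuation v of K satisfies v(2) = e). If −1 is a fourth power in K, then 4 divides e. -/
/-- Let `K` be a finite extension of `ℚ₂` with normalized (surjective) discrete
valuation `v` and ramification index `e`, i.e. `v 2 = e`. If `-1` is a fourth
power in `K`, then `4 ∣ e`. -/
theorem stmt_16 {K : Type*} [Field K] [Algebra ℚ_[2] K] [FiniteDimensional ℚ_[2] K]
    (v : K → WithTop ℤ)
    (hv0 : ∀ x : K, v x = ⊤ ↔ x = 0)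
    (hvmul : ∀ x y : K, v (x * y) = v x + v y)
    (hvadd : ∀ x y : K, min (v x) (v y) ≤ v (x + y))
    (hsurj : ∀ n : ℤ, ∃ x : K, v x = (n : WithTop ℤ))
    (e : ℕ) (h2 : v 2 = ((e : ℤ) : WithTop ℤ))
    (x : K) (hx : x ^ 4 = -1) :
    4 ∣ e := by
  have hchar : CharZero K := charZero_of_injective_algebraMap (algebraMap ℚ_[2] K).injective
  have h2K : (2:K) ≠ 0 := two_ne_zero
  have hfin : ∀ z : K, z ≠ 0 → ∃ n : ℤ, v z = (n : WithTop ℤ) := by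
    intro z hz
    cases h : v z with
    | top => exact absurd ((hv0 z).1 h) hz
    | coe n => exact ⟨n, rfl⟩
  -- v 1 = 0
  have v1 : v 1 = 0 := by
    obtain ⟨n, hn⟩ := hfin 1 one_ne_zero
    have h := hvmul 1 1
    rw [one_mul, hn] at h
    have h' : (n:ℤ) = n + n := by exact_mod_cast h
    have : n = 0 := by omega
    rw [hn, this]; rfl
  -- v (-1) = 0
  have vneg1 : v (-1 : K) = 0 := by
    obtain ⟨n, hn⟩ := hfin (-1) (by simp)
    have h := hvmul (-1) (-1)
    rw [neg_mul_neg, one_mul, v1, hn] at h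
    have h' : (0:ℤ) = n + n := by exact_mod_cast h
    have : n = 0 := by omega
    rw [hn, this]; rfl
  have hx0 : x ≠ 0 := by
    intro h
    rw [h] at hx
    simp at hx
  -- v x = 0
  have vx : v x = 0 := by
    obtain ⟨n, hn⟩ := hfin x hx0
    have h4 : x*x*x*x = -1 := by linear_combination hx
    have h := hvmul (x*x*x) x
    rw [h4, hvmul (x*x) x, hvmul x x, hn, vneg1] at h
    have h' : (0:ℤ) = n + n + n + n := by exact_mod_cast h
    have : n = 0 := by omega
    rw [hn, this]; rfl
  have hy2 : (x^2)^2 = -1 := by linear_combination hx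
  have vy : v (x^2) = 0 := by
    have h := hvmul x x
    rw [vx] at h
    have : x^2 = x*x := sq x
    rw [this, h]; rfl
  have hne1y : 1 + x^2 ≠ 0 := by
    intro h
    have hyv : x^2 = -1 := by linear_combination h
    have : (2:K) = 0 := by
      rw [hyv] at hy2
      linear_combination hy2
    exact h2K this
  obtain ⟨a, ha⟩ := hfin (1 + x^2) hne1y
  -- (1+y)^2 = 2y gives a + a = e
  have hsq : (1 + x^2) * (1 + x^2) = 2 * (x^2) := by linear_combination hy2
  have hae : a + a = (e:ℤ) := by
    have h := hvmul (1 + x^2) (1 + x^2)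
    rw [hsq, hvmul 2 (x^2), h2, vy, ha, add_zero] at h
    exact_mod_cast h.symm
  rcases Nat.eq_zero_or_pos e with he | he
  · simp [he]
  have hae' : a < (e:ℤ) := by omega
  -- v (2*x) = e
  have v2x : v (2*x) = ((e:ℤ) : WithTop ℤ) := by
    rw [hvmul, h2, vx, add_zero]
  have vneg2x : v (-(2*x)) = ((e:ℤ) : WithTop ℤ) := by
    have : -(2*x) = (-1) * (2*x) := by ring
    rw [this, hvmul, vneg1, v2x, zero_add]
  -- v ((1+x^2) - 2*x) = a
  have hsum : v ((1 + x^2) - 2*x) = (a : WithTop ℤ) := by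
    have hge : (a : WithTop ℤ) ≤ v ((1 + x^2) - 2*x) := by
      have h := hvadd (1 + x^2) (-(2*x))
      rw [ha, vneg2x] at h
      have hmin : min ((a:WithTop ℤ)) (((e:ℤ):WithTop ℤ)) = (a:WithTop ℤ) := by
        apply min_eq_left
        exact_mod_cast hae'.le
      rw [hmin] at h
      convert h using 2
      ring
    have hle : v ((1 + x^2) - 2*x) ≤ (a : WithTop ℤ) := by
      by_contra hc
      push_neg at hc
      have h := hvadd ((1 + x^2) - 2*x) (2*x)
      rw [v2x] at h
      have heq : (1 + x^2) - 2*x + 2*x = 1 + x^2 := by ring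
      rw [heq, ha] at h
      have hlt : (a : WithTop ℤ) < min (v ((1 + x^2) - 2*x)) (((e:ℤ):WithTop ℤ)) := by
        apply lt_min hc
        exact_mod_cast hae'
      exact absurd (lt_of_lt_of_le hlt h) (lt_irrefl _)
    exact le_antisymm hle hge
  -- (x-1)^2 = (1+x^2) - 2x
  have hx1 : x - 1 ≠ 0 := by
    intro h
    have : (1 + x^2) - 2*x = 0 := by linear_combination (x - 1) * h
    rw [this] at hsum
    rw [(hv0 0).2 rfl] at hsum
    exact (WithTop.coe_ne_top (a := a)) hsum.symm
  obtain ⟨b, hb⟩ := hfin (x - 1) hx1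
  have hkey : (x - 1) * (x - 1) = (1 + x^2) - 2*x := by ring
  have hba : b + b = a := by
    have h := hvmul (x-1) (x-1)
    rw [hkey, hsum, hb] at h
    exact_mod_cast h.symm
  omega
end

section
/- Let K be a discretely valued field with valuation v, valuation ring O with maximal ideal m, residue field of cardinality 2, and v(2) = 4, and let τ be a uniformizer. Then for every x ∈ O, the class of x⁴ modulo m⁸ equals the class of one of 0, 1, τ⁴, or τ⁴ + 2τ² + 1. -/
/-- Let `K` be a discretely valued field with surjective valuation `v`, residue
field of cardinality 2, and `v 2 = 4`, and let `τ` be a uniformizer. Then for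
every `x` in the valuation ring, `x⁴` is congruent modulo `m⁸` to one of
`0`, `1`, `τ⁴`, `τ⁴ + 2τ² + 1`. -/
theorem stmt_17 {K : Type*} [Field K] (v : K → WithTop ℤ)
    (hv0 : ∀ x : K, v x = ⊤ ↔ x = 0)
    (hvmul : ∀ x y : K, v (x * y) = v x + v y)
    (hvadd : ∀ x y : K, min (v x) (v y) ≤ v (x + y))
    (hsurj : ∀ n : ℤ, ∃ x : K, v x = (n : WithTop ℤ))
    (hres : ∀ x : K, v x = 0 → 0 < v (x - 1))
    (h2 : v 2 = ((4 : ℤ) : WithTop ℤ))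
    (τ : K) (hτ : v τ = ((1 : ℤ) : WithTop ℤ)) :
    ∀ x : K, 0 ≤ v x →
      ∃ r ∈ ({0, 1, τ ^ 4, τ ^ 4 + 2 * τ ^ 2 + 1} : Set K),
        ((8 : ℤ) : WithTop ℤ) ≤ v (x ^ 4 - r) := by
  -- basic lemmas
  have hcast : ∀ m n : ℤ, m ≤ n → ((m : ℤ) : WithTop ℤ) ≤ ((n : ℤ) : WithTop ℤ) := by
    intro m n h; exact_mod_cast h
  have hv1 : v 1 = 0 := by
    have h11 := hvmul 1 1
    rw [mul_one] at h11
    cases hv : v 1 with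
    | top => exact absurd ((hv0 1).mp hv) one_ne_zero
    | coe n =>
      rw [hv] at h11
      have hn : n = n + n := by exact_mod_cast h11
      have : n = 0 := by omega
      rw [this]; rfl
  have hterm : ∀ (p q r : ℤ) (a b : K), ((p : ℤ) : WithTop ℤ) ≤ v a →
      ((q : ℤ) : WithTop ℤ) ≤ v b → r ≤ p + q → ((r : ℤ) : WithTop ℤ) ≤ v (a * b) := by
    intro p q r a b ha hb hpq
    rw [hvmul]
    calc ((r : ℤ) : WithTop ℤ) ≤ ((p + q : ℤ) : WithTop ℤ) := hcast _ _ hpq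
      _ = ((p : ℤ) : WithTop ℤ) + ((q : ℤ) : WithTop ℤ) := by push_cast; ring
      _ ≤ v a + v b := add_le_add ha hb
  have hge : ∀ a b : K, ((8 : ℤ) : WithTop ℤ) ≤ v a → ((8 : ℤ) : WithTop ℤ) ≤ v b →
      ((8 : ℤ) : WithTop ℤ) ≤ v (a + b) := fun a b ha hb =>
    le_trans (le_min ha hb) (hvadd a b)
  have hstep : ∀ (a : K) (n : ℤ), ((n : ℤ) : WithTop ℤ) ≤ v a →
      v a ≠ ((n : ℤ) : WithTop ℤ) → (((n + 1 : ℤ)) : WithTop ℤ) ≤ v a := by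
    intro a n h1 h2'
    cases hva : v a with
    | top => exact le_top
    | coe m =>
      rw [hva] at h1 h2'
      have hm : n ≤ m := by exact_mod_cast h1
      have hne : m ≠ n := fun h => h2' (by exact_mod_cast h)
      exact_mod_cast (by omega : n + 1 ≤ m)
  have hpos1 : ∀ a : K, 0 < v a → ((1 : ℤ) : WithTop ℤ) ≤ v a := by
    intro a ha
    cases hva : v a with
    | top => exact le_top
    | coe m =>
      rw [hva] at ha
      have : (0 : ℤ) < m := by exact_mod_cast ha
      exact_mod_cast this
  have hv3 : ((0 : ℤ) : WithTop ℤ) ≤ v 3 := by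
    have h3 : (3 : K) = 1 + 2 := by norm_num
    rw [h3]
    refine le_trans ?_ (hvadd 1 2)
    rw [hv1, h2]
    exact le_min (le_of_eq (by norm_cast)) (hcast 0 4 (by norm_num))
  have hv4 : ((8 : ℤ) : WithTop ℤ) ≤ v 4 := by
    have h4 : (4 : K) = 2 * 2 := by norm_num
    rw [h4]
    exact hterm 4 4 8 2 2 (le_of_eq h2.symm) (le_of_eq h2.symm) (by norm_num)
  have hv6 : ((4 : ℤ) : WithTop ℤ) ≤ v 6 := by
    have h6 : (6 : K) = 2 * 3 := by norm_num
    rw [h6]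
    exact hterm 4 0 4 2 3 (le_of_eq h2.symm) hv3 (by norm_num)
  have hτ0 : τ ≠ 0 := by
    intro h
    rw [(hv0 τ).mpr h] at hτ
    exact (WithTop.coe_ne_top hτ.symm).elim
  have hdiv : ∀ a : K, v a = ((1 : ℤ) : WithTop ℤ) → v (a / τ) = 0 ∧ (a / τ) * τ = a := by
    intro a ha
    have hmc : (a / τ) * τ = a := div_mul_cancel₀ a hτ0
    have h' := hvmul (a / τ) τ
    rw [hmc, ha, hτ] at h'
    refine ⟨?_, hmc⟩
    cases hva : v (a / τ) with
    | top => rw [hva, top_add] at h'; exact (WithTop.coe_ne_top h').elim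
    | coe n =>
      rw [hva] at h'
      have : (1 : ℤ) = n + 1 := by exact_mod_cast h'
      have hn : n = 0 := by omega
      rw [hn]; rfl
  intro x hx
  by_cases hx0 : v x = 0
  · -- v x = 0 : t = x - 1 has v t ≥ 1
    have ht1 : ((1 : ℤ) : WithTop ℤ) ≤ v (x - 1) := hpos1 _ (hres x hx0)
    by_cases ht : v (x - 1) = ((1 : ℤ) : WithTop ℤ)
    · -- hard case: r = τ^4 + 2τ^2 + 1
      obtain ⟨hw0, hwτ⟩ := hdiv (x - 1) ht
      set s : K := (x - 1) / τ - 1 with hs_def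
      have hs : ((1 : ℤ) : WithTop ℤ) ≤ v s := hpos1 _ (hres _ hw0)
      have hxeq : x = 1 + τ + τ * s := by
        rw [hs_def]; linear_combination -hwτ
      refine ⟨τ ^ 4 + 2 * τ ^ 2 + 1, by simp, ?_⟩
      have hid : x ^ 4 - (τ ^ 4 + 2 * τ ^ 2 + 1) =
          4 * (x - 1) + 4 * ((x - 1) * (x - 1)) + 4 * ((x - 1) * ((x - 1) * (x - 1)))
          + 4 * ((τ * τ) * s) + 2 * ((τ * τ) * (s * s))
          + 4 * ((τ * τ * (τ * τ)) * s) + 6 * ((τ * τ * (τ * τ)) * (s * s))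
          + 4 * ((τ * τ * (τ * τ)) * (s * (s * s)))
          + (τ * τ * (τ * τ)) * (s * (s * (s * s))) := by
        rw [hxeq]; ring
      rw [hid]
      have hτ2 : ((2 : ℤ) : WithTop ℤ) ≤ v (τ * τ) :=
        hterm 1 1 2 τ τ (le_of_eq hτ.symm) (le_of_eq hτ.symm) (by norm_num)
      have hτ4 : ((4 : ℤ) : WithTop ℤ) ≤ v (τ * τ * (τ * τ)) :=
        hterm 2 2 4 _ _ hτ2 hτ2 (by norm_num)
      have hs2 : ((2 : ℤ) : WithTop ℤ) ≤ v (s * s) := hterm 1 1 2 s s hs hs (by norm_num)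
      have hs3 : ((3 : ℤ) : WithTop ℤ) ≤ v (s * (s * s)) := hterm 1 2 3 _ _ hs hs2 (by norm_num)
      have hs4 : ((4 : ℤ) : WithTop ℤ) ≤ v (s * (s * (s * s))) :=
        hterm 1 3 4 _ _ hs hs3 (by norm_num)
      have ht2 : ((2 : ℤ) : WithTop ℤ) ≤ v ((x - 1) * (x - 1)) :=
        hterm 1 1 2 _ _ ht1 ht1 (by norm_num)
      have ht3 : ((3 : ℤ) : WithTop ℤ) ≤ v ((x - 1) * ((x - 1) * (x - 1))) :=
        hterm 1 2 3 _ _ ht1 ht2 (by norm_num)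
      refine hge _ _ (hge _ _ (hge _ _ (hge _ _ (hge _ _ (hge _ _ (hge _ _ (hge _ _
        ?_ ?_) ?_) ?_) ?_) ?_) ?_) ?_) ?_
      · exact hterm 8 1 8 _ _ hv4 ht1 (by norm_num)
      · exact hterm 8 2 8 _ _ hv4 ht2 (by norm_num)
      · exact hterm 8 3 8 _ _ hv4 ht3 (by norm_num)
      · exact hterm 8 3 8 _ _ hv4 (hterm 2 1 3 _ _ hτ2 hs (by norm_num)) (by norm_num)
      · exact hterm 4 4 8 _ _ (le_of_eq h2.symm) (hterm 2 2 4 _ _ hτ2 hs2 (by norm_num))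
          (by norm_num)
      · exact hterm 8 5 8 _ _ hv4 (hterm 4 1 5 _ _ hτ4 hs (by norm_num)) (by norm_num)
      · exact hterm 4 6 8 _ _ hv6 (hterm 4 2 6 _ _ hτ4 hs2 (by norm_num)) (by norm_num)
      · exact hterm 8 7 8 _ _ hv4 (hterm 4 3 7 _ _ hτ4 hs3 (by norm_num)) (by norm_num)
      · exact hterm 4 4 8 _ _ hτ4 hs4 (by norm_num)
    · -- v (x-1) ≥ 2 : r = 1
      have ht2 : ((2 : ℤ) : WithTop ℤ) ≤ v (x - 1) := hstep _ 1 ht1 ht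
      refine ⟨1, by simp, ?_⟩
      have hid : x ^ 4 - 1 =
          4 * (x - 1) + 6 * ((x - 1) * (x - 1))
          + 4 * ((x - 1) * ((x - 1) * (x - 1)))
          + ((x - 1) * (x - 1)) * ((x - 1) * (x - 1)) := by ring
      rw [hid]
      have htt : ((4 : ℤ) : WithTop ℤ) ≤ v ((x - 1) * (x - 1)) :=
        hterm 2 2 4 _ _ ht2 ht2 (by norm_num)
      refine hge _ _ (hge _ _ (hge _ _ ?_ ?_) ?_) ?_
      · exact hterm 8 2 8 _ _ hv4 ht2 (by norm_num)
      · exact hterm 4 4 8 _ _ hv6 htt (by norm_num)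
      · exact hterm 8 6 8 _ _ hv4 (hterm 2 4 6 _ _ ht2 htt (by norm_num)) (by norm_num)
      · exact hterm 4 4 8 _ _ htt htt (by norm_num)
  · have hx1 : ((1 : ℤ) : WithTop ℤ) ≤ v x := by
      have h0 : ((0 : ℤ) : WithTop ℤ) ≤ v x := le_trans (le_of_eq (by norm_cast)) hx
      have := hstep x 0 h0 (fun h => hx0 (by rw [h]; rfl))
      simpa using this
    by_cases hxv1 : v x = ((1 : ℤ) : WithTop ℤ)
    · -- v x = 1 : r = τ^4
      obtain ⟨hw0, hwτ⟩ := hdiv x hxv1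
      set s : K := x / τ - 1 with hs_def
      have hs : ((1 : ℤ) : WithTop ℤ) ≤ v s := hpos1 _ (hres _ hw0)
      have hxeq : x = τ + τ * s := by
        rw [hs_def]; linear_combination -hwτ
      refine ⟨τ ^ 4, by simp, ?_⟩
      have hid : x ^ 4 - τ ^ 4 =
          4 * ((τ * τ * (τ * τ)) * s) + 6 * ((τ * τ * (τ * τ)) * (s * s))
          + 4 * ((τ * τ * (τ * τ)) * (s * (s * s)))
          + (τ * τ * (τ * τ)) * (s * (s * (s * s))) := by
        rw [hxeq]; ring
      rw [hid]
      have hτ2 : ((2 : ℤ) : WithTop ℤ) ≤ v (τ * τ) :=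
        hterm 1 1 2 τ τ (le_of_eq hτ.symm) (le_of_eq hτ.symm) (by norm_num)
      have hτ4 : ((4 : ℤ) : WithTop ℤ) ≤ v (τ * τ * (τ * τ)) :=
        hterm 2 2 4 _ _ hτ2 hτ2 (by norm_num)
      have hs2 : ((2 : ℤ) : WithTop ℤ) ≤ v (s * s) := hterm 1 1 2 s s hs hs (by norm_num)
      have hs3 : ((3 : ℤ) : WithTop ℤ) ≤ v (s * (s * s)) := hterm 1 2 3 _ _ hs hs2 (by norm_num)
      have hs4 : ((4 : ℤ) : WithTop ℤ) ≤ v (s * (s * (s * s))) :=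
        hterm 1 3 4 _ _ hs hs3 (by norm_num)
      refine hge _ _ (hge _ _ (hge _ _ ?_ ?_) ?_) ?_
      · exact hterm 8 5 8 _ _ hv4 (hterm 4 1 5 _ _ hτ4 hs (by norm_num)) (by norm_num)
      · exact hterm 4 6 8 _ _ hv6 (hterm 4 2 6 _ _ hτ4 hs2 (by norm_num)) (by norm_num)
      · exact hterm 8 7 8 _ _ hv4 (hterm 4 3 7 _ _ hτ4 hs3 (by norm_num)) (by norm_num)
      · exact hterm 4 4 8 _ _ hτ4 hs4 (by norm_num)
    · -- v x ≥ 2 : r = 0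
      have hx2 : ((2 : ℤ) : WithTop ℤ) ≤ v x := hstep x 1 hx1 hxv1
      refine ⟨0, by simp, ?_⟩
      have hid : x ^ 4 - 0 = (x * x) * (x * x) := by ring
      rw [hid]
      exact hterm 4 4 8 _ _ (hterm 2 2 4 _ _ hx2 hx2 (by norm_num))
        (hterm 2 2 4 _ _ hx2 hx2 (by norm_num)) (by norm_num)
end

section
/- Let R = 𝔽₂[x, y, z]/I where I = (x² + 1, y², z² + x, xy + y, xz + y + z, yz + x + 1). Then the ideal J generated by the images of x + 1, y, z + 1 is a maximal ideal of R satisfying J⁴ = 0 and J³ ≠ 0. -/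
open MvPolynomial

noncomputable abbrev stmt18X : MvPolynomial (Fin 3) (ZMod 2) := X 0
noncomputable abbrev stmt18Y : MvPolynomial (Fin 3) (ZMod 2) := X 1
noncomputable abbrev stmt18Z : MvPolynomial (Fin 3) (ZMod 2) := X 2

/-- The ideal `I = (x² + 1, y², z² + x, xy + y, xz + y + z, yz + x + 1)`
of `𝔽₂[x, y, z]`. -/
noncomputable abbrev stmt18I : Ideal (MvPolynomial (Fin 3) (ZMod 2)) :=
  Ideal.span {stmt18X ^ 2 + 1, stmt18Y ^ 2, stmt18Z ^ 2 + stmt18X,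
    stmt18X * stmt18Y + stmt18Y, stmt18X * stmt18Z + stmt18Y + stmt18Z,
    stmt18Y * stmt18Z + stmt18X + 1}

/-- The ideal `J` of `R = 𝔽₂[x, y, z]/I` generated by the images of
`x + 1`, `y`, `z + 1`. -/
noncomputable abbrev stmt18J : Ideal (MvPolynomial (Fin 3) (ZMod 2) ⧸ stmt18I) :=
  Ideal.span {Ideal.Quotient.mk stmt18I (stmt18X + 1),
    Ideal.Quotient.mk stmt18I stmt18Y,
    Ideal.Quotient.mk stmt18I (stmt18Z + 1)}

/-!
Modulo `I`, and using `2 = 0`, one has `x̄ = z̄²`, `ȳ = z̄³ + z̄` and `z̄⁴ = 1`. Hence `u = z̄ + 1`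
generates `J` (as `x̄ + 1 = u²` and `ȳ = u² z̄`) and `u⁴ = z̄⁴ + 1 = 0`. The substitution
`x ↦ t² + 1, y ↦ t³ + t², z ↦ t + 1` into `𝔽₂[t]/(t⁴)` kills `I` and sends `u` to `t`, so `u³ ≠ 0`.
Finally `J` is the kernel of evaluation at `(1, 0, 1)`, a surjection onto `𝔽₂`, since every
polynomial is congruent to its value at a point modulo the ideal of that point.
-/

theorem MvPolynomial.ker_eval_le_of_X_sub_C_mem {σ R : Type*} [CommRing R] (a : σ → R)
    {K : Ideal (MvPolynomial σ R)} (hK : ∀ i, X i - C (a i) ∈ K) :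
    RingHom.ker (eval a) ≤ K := by
  have sub_eval_mem (p : MvPolynomial σ R) : p - C (eval a p) ∈ K := by
    induction p using MvPolynomial.induction_on with
    | C r => simp
    | add p q hp hq => simpa [add_sub_add_comm] using K.add_mem hp hq
    | mul_X p i hp =>
      have h : p * X i - C (eval a (p * X i))
          = (p - C (eval a p)) * X i + C (eval a p) * (X i - C (a i)) := by
        simp only [eval_mul, eval_X, C_mul]; ring
      rw [h]
      exact K.add_mem (K.mul_mem_right _ hp) (K.mul_mem_left _ (hK i))
  intro p hp
  simpa [RingHom.mem_ker.1 hp] using sub_eval_mem p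

theorem AdjoinRoot.root_X_pow_pow_eq_zero {R : Type*} [CommRing R] (n : ℕ) :
    root (Polynomial.X ^ n : Polynomial R) ^ n = 0 := by
  rw [← mk_X, ← map_pow, mk_self]

theorem AdjoinRoot.root_X_pow_pow_ne_zero {R : Type*} [CommRing R] [Nontrivial R] {m n : ℕ}
    (h : m < n) : root (Polynomial.X ^ n : Polynomial R) ^ m ≠ 0 := by
  rw [← mk_X, ← map_pow, Ne, mk_eq_zero, Polynomial.X_pow_dvd_iff]
  push Not
  exact ⟨m, h, by simp⟩

theorem ZMod.natCast_eq_zero_of_algebra {A : Type*} [Semiring A] (n : ℕ) [Algebra (ZMod n) A] :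
    (n : A) = 0 := by
  rw [← map_natCast (algebraMap (ZMod n) A), ZMod.natCast_self, map_zero]

namespace Stmt18

local notation "𝔽₂[x,y,z]" => MvPolynomial (Fin 3) (ZMod 2)
local notation "R" => 𝔽₂[x,y,z] ⧸ stmt18I
local notation "x̄" => Ideal.Quotient.mk stmt18I stmt18X
local notation "ȳ" => Ideal.Quotient.mk stmt18I stmt18Y
local notation "z̄" => Ideal.Quotient.mk stmt18I stmt18Z

theorem stmt18I_le_ker {A : Type*} [CommRing A] (f : 𝔽₂[x,y,z] →+* A)
    (h₁ : f stmt18X ^ 2 + 1 = 0) (h₂ : f stmt18Y ^ 2 = 0) (h₃ : f stmt18Z ^ 2 + f stmt18X = 0)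
    (h₄ : f stmt18X * f stmt18Y + f stmt18Y = 0)
    (h₅ : f stmt18X * f stmt18Z + f stmt18Y + f stmt18Z = 0)
    (h₆ : f stmt18Y * f stmt18Z + f stmt18X + 1 = 0) : stmt18I ≤ RingHom.ker f := by
  simp only [Ideal.span_le, Set.insert_subset_iff, Set.singleton_subset_iff, SetLike.mem_coe,
    RingHom.mem_ker, map_add, map_mul, map_pow, map_one]
  exact ⟨h₁, h₂, h₃, h₄, h₅, h₆⟩

theorem two_eq_zero : (2 : R) = 0 := by
  exact_mod_cast ZMod.natCast_eq_zero_of_algebra 2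

theorem sub_one_eq_add_one (r : R) : r - 1 = r + 1 := by
  linear_combination -two_eq_zero

theorem mk_X_eq : x̄ = z̄ ^ 2 := by
  have h : Ideal.Quotient.mk stmt18I (stmt18Z ^ 2 + stmt18X) = 0 :=
    Ideal.Quotient.eq_zero_iff_mem.2 (Ideal.subset_span (by simp))
  simp only [map_add, map_pow] at h
  linear_combination h - z̄ ^ 2 * two_eq_zero

theorem mk_Y_eq : ȳ = z̄ ^ 3 + z̄ := by
  have h : Ideal.Quotient.mk stmt18I (stmt18X * stmt18Z + stmt18Y + stmt18Z) = 0 :=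
    Ideal.Quotient.eq_zero_iff_mem.2 (Ideal.subset_span (by simp))
  simp only [map_add, map_mul, mk_X_eq] at h
  linear_combination h - (z̄ ^ 3 + z̄) * two_eq_zero

theorem mk_Z_pow_four : z̄ ^ 4 = 1 := by
  have h : Ideal.Quotient.mk stmt18I (stmt18X ^ 2 + 1) = 0 :=
    Ideal.Quotient.eq_zero_iff_mem.2 (Ideal.subset_span (by simp))
  simp only [map_add, map_pow, map_one, mk_X_eq] at h
  linear_combination h - two_eq_zero

theorem mk_Z_add_one_pow_four : (z̄ + 1) ^ 4 = 0 := by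
  linear_combination mk_Z_pow_four + (2 * z̄ ^ 3 + 3 * z̄ ^ 2 + 2 * z̄ + 1) * two_eq_zero

theorem stmt18J_eq_span : stmt18J = Ideal.span {z̄ + 1} := by
  simp only [stmt18J, map_add, map_one]
  refine le_antisymm ?_ (Ideal.span_mono (by simp))
  simp only [Ideal.span_le, Set.insert_subset_iff, Set.singleton_subset_iff, SetLike.mem_coe,
    Ideal.mem_span_singleton]
  refine ⟨⟨z̄ + 1, ?_⟩, ⟨(z̄ + 1) * z̄, ?_⟩, dvd_rfl⟩
  · linear_combination mk_X_eq - z̄ * two_eq_zero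
  · linear_combination mk_Y_eq - z̄ ^ 2 * two_eq_zero

local notation "𝔽₂[t]/(t⁴)" => AdjoinRoot (Polynomial.X ^ 4 : Polynomial (ZMod 2))
local notation "t" => AdjoinRoot.root (Polynomial.X ^ 4 : Polynomial (ZMod 2))

noncomputable def toTruncated : 𝔽₂[x,y,z] →+* 𝔽₂[t]/(t⁴) :=
  (aeval ![t ^ 2 + 1, t ^ 3 + t ^ 2, t + 1]).toRingHom

theorem two_eq_zero_truncated : (2 : 𝔽₂[t]/(t⁴)) = 0 := by
  exact_mod_cast ZMod.natCast_eq_zero_of_algebra 2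

theorem stmt18I_le_ker_toTruncated : stmt18I ≤ RingHom.ker toTruncated := by
  have h4 : t ^ 4 = 0 := AdjoinRoot.root_X_pow_pow_eq_zero 4
  have h2 := two_eq_zero_truncated
  apply stmt18I_le_ker <;>
    simp only [toTruncated, AlgHom.toRingHom_eq_coe, RingHom.coe_coe, aeval_X,
      Matrix.cons_val_zero, Matrix.cons_val_one, Matrix.cons_val_two, Matrix.head_cons,
      Matrix.tail_cons]
  · linear_combination h4 + (t ^ 2 + 1) * h2
  · linear_combination (t ^ 2 + 2 * t + 1) * h4
  · linear_combination (t ^ 2 + t + 1) * h2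
  · linear_combination (t + 1) * h4 + (t ^ 3 + t ^ 2) * h2
  · linear_combination (t ^ 3 + t ^ 2 + t + 1) * h2
  · linear_combination h4 + (t ^ 3 + t ^ 2 + 1) * h2

theorem toTruncated_Z_add_one_pow_three : toTruncated ((stmt18Z + 1) ^ 3) = t ^ 3 := by
  simp only [toTruncated, AlgHom.toRingHom_eq_coe, RingHom.coe_coe, map_pow, map_add, map_one,
    aeval_X, Matrix.cons_val_two, Matrix.tail_cons, Matrix.head_cons]
  linear_combination (3 * t ^ 2 + 6 * t + 4) * two_eq_zero_truncated

theorem mk_Z_add_one_pow_three_ne_zero : (z̄ + 1) ^ 3 ≠ 0 := by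
  rw [← map_one (Ideal.Quotient.mk stmt18I), ← map_add, ← map_pow, Ne,
    Ideal.Quotient.eq_zero_iff_mem]
  intro h
  have h0 : toTruncated ((stmt18Z + 1) ^ 3) = 0 := stmt18I_le_ker_toTruncated h
  rw [toTruncated_Z_add_one_pow_three] at h0
  exact AdjoinRoot.root_X_pow_pow_ne_zero (by norm_num) h0

noncomputable def evalOneZeroOne : R →+* ZMod 2 :=
  Ideal.Quotient.lift stmt18I (eval ![1, 0, 1]) (by apply stmt18I_le_ker <;> simp <;> decide)

@[simp]
theorem evalOneZeroOne_mk (p : 𝔽₂[x,y,z]) :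
    evalOneZeroOne (Ideal.Quotient.mk stmt18I p) = eval ![1, 0, 1] p :=
  Ideal.Quotient.lift_mk _ _ _

theorem stmt18J_eq_ker : stmt18J = RingHom.ker evalOneZeroOne := by
  refine le_antisymm ?_ fun r hr => ?_
  · simp [Ideal.span_le, Set.insert_subset_iff]
    decide
  · obtain ⟨p, rfl⟩ := Ideal.Quotient.mk_surjective r
    have hp : p ∈ RingHom.ker (eval ![1, 0, 1]) := hr
    refine ker_eval_le_of_X_sub_C_mem ![1, 0, 1] (K := stmt18J.comap _) (fun i => ?_) hp
    fin_cases i <;>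
      simp only [Ideal.mem_comap, map_sub, Fin.zero_eta, Fin.mk_one, Fin.reduceFinMk,
        Matrix.cons_val, map_one, map_zero, sub_zero, sub_one_eq_add_one] <;>
      exact Ideal.subset_span (by simp)

theorem stmt18J_isMaximal : stmt18J.IsMaximal := by
  rw [stmt18J_eq_ker]
  exact RingHom.ker_isMaximal_of_surjective _ fun c => ⟨Ideal.Quotient.mk _ (C c), by simp⟩

end Stmt18

/-- With `R = 𝔽₂[x,y,z]/(x²+1, y², z²+x, xy+y, xz+y+z, yz+x+1)`, the ideal
`J = (x̄+1, ȳ, z̄+1)` of `R` is maximal and satisfies `J⁴ = 0` and `J³ ≠ 0`. -/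
theorem stmt_18 : stmt18J.IsMaximal ∧ stmt18J ^ 4 = ⊥ ∧ stmt18J ^ 3 ≠ ⊥ := by
  refine ⟨Stmt18.stmt18J_isMaximal, ?_, ?_⟩
  · rw [Stmt18.stmt18J_eq_span, Ideal.span_singleton_pow, Stmt18.mk_Z_add_one_pow_four,
      Ideal.span_singleton_eq_bot]
  · rw [Stmt18.stmt18J_eq_span, Ideal.span_singleton_pow, Ne, Ideal.span_singleton_eq_bot]
    exact Stmt18.mk_Z_add_one_pow_three_ne_zero
end
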